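/- For all (α,β,α̇,β̇) ∈ ℝ⁴, the matrix (∂𝕀_e/∂α)(α,β)·α̇ + (∂𝕀_e/∂β)(α,β)·β̇ − 2 K(α,β,α̇,β̇) is skew-symmetric. Equivalently, along any C¹ curve (α(t),β(t)), d/dt 𝕀_e(α(t),β(t)) − 2K(α,β,α̇,β̇) is skew-symmetric, so the regularized error dynamics 𝕀_e(ω̇_e + 𝕀_e⁻¹K ω_e) = τ̃ have the structure of a mechanical system with its Levi-Civita-compatible quadratic-velocity forces. -/
import Mathlib


open Matrix

/-- Error-dynamics inertia matrix `𝕀_e(α,β)` of the three-link planar biped. -/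
noncomputable def Ie (m MH MT l r : ℝ) (α β : ℝ) : Matrix (Fin 2) (Fin 2) ℝ :=
  Matrix.diagonal ![l^2 * (4*MH + 2*MT*(1 - Real.cos α) + m*(3 - 2*Real.cos β)),
                    r^2 * (4*MH + 2*MT*(1 - Real.cos α) + m*(3 - 2*Real.cos β))]

/-- Quadratic-velocity matrix `K(α,β,α̇,β̇)` of the regularized error dynamics, so that the
connection coefficient matrix is `Γ_e = 𝕀_e⁻¹ K`. -/
noncomputable def Kmat (m MT l r : ℝ) (α β αd βd : ℝ) : Matrix (Fin 2) (Fin 2) ℝ :=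
  !![MT*l^2*Real.sin α * αd + m*l^2*Real.sin β * βd,
     m*l^2*Real.sin β * αd - MT*r^2*Real.sin α * βd;
     -(m*l^2*Real.sin β) * αd + MT*r^2*Real.sin α * βd,
     MT*r^2*Real.sin α * αd + m*r^2*Real.sin β * βd]

/-- For all `(α,β,α̇,β̇)`, the matrix `(∂𝕀_e/∂α)·α̇ + (∂𝕀_e/∂β)·β̇ − 2K(α,β,α̇,β̇)` is
skew-symmetric: along any C¹ curve, `d/dt 𝕀_e − 2K` is skew-symmetric, so the regularized
error dynamics have the structure of a mechanical system with Levi-Civita-compatible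
quadratic-velocity forces. -/
theorem Ie_deriv_sub_two_K_skew (m MH MT l r : ℝ) (hm : 0 < m) (hMH : 0 < MH)
    (hMT : 0 < MT) (hl : 0 < l) (hr : 0 < r) (α β αd βd : ℝ) :
    (Matrix.of fun i j : Fin 2 =>
        deriv (fun a => Ie m MH MT l r a β i j) α * αd
          + deriv (fun b => Ie m MH MT l r α b i j) β * βd
          - 2 * Kmat m MT l r α β αd βd i j)ᵀ
      = -(Matrix.of fun i j : Fin 2 =>
        deriv (fun a => Ie m MH MT l r a β i j) α * αd
          + deriv (fun b => Ie m MH MT l r α b i j) β * βd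
          - 2 * Kmat m MT l r α β αd βd i j) := by
  ext i j
  fin_cases i <;> fin_cases j <;>
    simp [Ie, Kmat, Matrix.diagonal, Matrix.of_apply, Fin.isValue, mul_comm] <;> ring_nf <;>
    · norm_num [Real.deriv_cos]
      ring
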